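/- arXiv:2602.06773 — 8 statements merged into one kernel-verified Lean document; each statement's English description precedes it below -/
import Mathlib

section
/- For the multicalibration boosting dynamics with unit rescaling weights, the sum of squared gaps between successive predictions is finite and bounded as ∑_{t=0}^{∞} ‖f_{t+1} − f_t‖₂² ≤ η ‖y − f₀‖₂²; consequently ‖f_{t+1} − f_t‖₂ → 0 as t → ∞. -/
open Matrix

/-- The action of a real matrix on vectors of `EuclideanSpace`. -/
noncomputable def mulVecE {m n : Type*} [Fintype m] [Fintype n] [DecidableEq n]
    (A : Matrix m n ℝ) (v : EuclideanSpace ℝ n) : EuclideanSpace ℝ m :=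
  Matrix.toEuclideanLin A v

/-!
Write `g_t = y - f_t` and `P = A(f_t)`. Since `P` is an orthogonal projection, `⟪g, P g⟫ = ‖P g‖²`,
so `‖g_{t+1}‖² = ‖g_t‖² - η (2 - η) ‖P g_t‖²` while `‖f_{t+1} - f_t‖² = η² ‖P g_t‖²`. For `η ≤ 1`
this gives `‖f_{t+1} - f_t‖² ≤ η (‖g_t‖² - ‖g_{t+1}‖²)`, and the right-hand sides telescope.
-/

open Finset Filter Topology
open scoped RealInnerProductSpace

theorem Matrix.isSymmetricProjection_toEuclideanLin {𝕜 n : Type*} [RCLike 𝕜] [Fintype n]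
    [DecidableEq n] {A : Matrix n n 𝕜} (hA : A.IsHermitian) (hAA : IsIdempotentElem A) :
    (toEuclideanLin A).IsSymmetricProjection :=
  ⟨hAA.map (toLpLinAlgEquiv 2), isSymmetric_toEuclideanLin_iff.mpr hA⟩

theorem sum_range_le_mul_of_le_mul_sub_succ {d a : ℕ → ℝ} {c : ℝ} (hc : 0 ≤ c)
    (ha : ∀ t, 0 ≤ a t) (h : ∀ t, d t ≤ c * (a t - a (t + 1))) (N : ℕ) :
    ∑ t ∈ range N, d t ≤ c * a 0 :=
  calc ∑ t ∈ range N, d t ≤ ∑ t ∈ range N, c * (a t - a (t + 1)) := sum_le_sum fun t _ => h t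
    _ = c * (a 0 - a N) := by rw [← mul_sum, sum_range_sub']
    _ ≤ c * a 0 := mul_le_mul_of_nonneg_left (by linarith [ha N]) hc

theorem tendsto_norm_atTop_zero_of_summable_sq {E : Type*} [SeminormedAddCommGroup E]
    {u : ℕ → E} (hu : Summable fun t => ‖u t‖ ^ 2) : Tendsto (fun t => ‖u t‖) atTop (𝓝 0) := by
  simpa [Real.sqrt_sq (norm_nonneg _)] using hu.tendsto_atTop_zero.sqrt

section InnerProductSpace

variable {E : Type*} [NormedAddCommGroup E] [InnerProductSpace ℝ E]

theorem LinearMap.IsSymmetricProjection.real_inner_apply_eq_norm_sq {P : E →ₗ[ℝ] E}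
    (hP : P.IsSymmetricProjection) (x : E) : ⟪x, P x⟫ = ‖P x‖ ^ 2 := by
  conv_lhs => rw [← hP.isIdempotentElem.eq, Module.End.mul_apply, ← hP.isSymmetric]
  exact real_inner_self_eq_norm_sq _

theorem LinearMap.IsSymmetricProjection.norm_smul_apply_sq_le {P : E →ₗ[ℝ] E}
    (hP : P.IsSymmetricProjection) {η : ℝ} (hη : η ≤ 1) (g : E) :
    ‖η • P g‖ ^ 2 ≤ η * (‖g‖ ^ 2 - ‖g - η • P g‖ ^ 2) := by
  rw [norm_sub_sq_real, real_inner_smul_right, hP.real_inner_apply_eq_norm_sq, norm_smul,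
    Real.norm_eq_abs, mul_pow, sq_abs]
  -- the difference of the two sides is `η² (1 - η) ‖P g‖²`
  nlinarith [mul_nonneg (mul_nonneg (sq_nonneg η) (sub_nonneg.2 hη)) (sq_nonneg ‖P g‖)]

theorem summable_and_tsum_norm_succ_sub_sq_le_of_projection_step
    (P : E → E →ₗ[ℝ] E) (hP : ∀ x, (P x).IsSymmetricProjection) {y : E} {η : ℝ}
    (hη0 : 0 ≤ η) (hη1 : η ≤ 1) {f : ℕ → E} (hf : ∀ t, f (t + 1) = f t + η • P (f t) (y - f t)) :
    Summable (fun t => ‖f (t + 1) - f t‖ ^ 2) ∧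
      ∑' t, ‖f (t + 1) - f t‖ ^ 2 ≤ η * ‖y - f 0‖ ^ 2 := by
  have hstep : ∀ t, ‖f (t + 1) - f t‖ ^ 2 ≤ η * (‖y - f t‖ ^ 2 - ‖y - f (t + 1)‖ ^ 2) := by
    intro t
    have hgap : f (t + 1) - f t = η • P (f t) (y - f t) := by rw [hf]; abel
    have hres : y - f (t + 1) = (y - f t) - η • P (f t) (y - f t) := by rw [hf]; abel
    rw [hgap, hres]
    exact (hP (f t)).norm_smul_apply_sq_le hη1 _
  have hpartial := sum_range_le_mul_of_le_mul_sub_succ hη0 (fun t => sq_nonneg ‖y - f t‖) hstep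
  exact ⟨summable_of_sum_range_le (fun _ => sq_nonneg _) hpartial,
    Real.tsum_le_of_sum_range_le (fun _ => sq_nonneg _) hpartial⟩

end InnerProductSpace

/-- **Summability of squared gaps for multicalibration boosting with unit weights.**
For the dynamics `f_{t+1} = f_t + η A(f_t)(y - f_t)` with orthogonal projections `A(f)`
and `η ∈ (0,1]`, the series of squared gaps is summable with
`∑_{t} ‖f_{t+1} - f_t‖₂² ≤ η ‖y - f₀‖₂²`, and consequently `‖f_{t+1} - f_t‖₂ → 0`. -/
theorem multicalibration_boosting_sum_sq_gaps
    {n : ℕ} (y : EuclideanSpace ℝ (Fin n)) (η : ℝ) (hη0 : 0 < η) (hη1 : η ≤ 1)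
    (A : EuclideanSpace ℝ (Fin n) → Matrix (Fin n) (Fin n) ℝ)
    (hAsymm : ∀ f, (A f)ᵀ = A f) (hAproj : ∀ f, A f * A f = A f)
    (f : ℕ → EuclideanSpace ℝ (Fin n))
    (hf : ∀ t, f (t + 1) = f t + η • mulVecE (A (f t)) (y - f t)) :
    Summable (fun t : ℕ => ‖f (t + 1) - f t‖ ^ 2) ∧
      (∑' t : ℕ, ‖f (t + 1) - f t‖ ^ 2) ≤ η * ‖y - f 0‖ ^ 2 ∧
      Filter.Tendsto (fun t : ℕ => ‖f (t + 1) - f t‖) Filter.atTop (nhds 0) := by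
  have hP : ∀ x, (toEuclideanLin (A x)).IsSymmetricProjection := fun x =>
    isSymmetricProjection_toEuclideanLin
      (by rw [IsHermitian, conjTranspose_eq_transpose_of_trivial, hAsymm]) (hAproj x)
  obtain ⟨hsummable, htsum⟩ :=
    summable_and_tsum_norm_succ_sub_sq_le_of_projection_step _ hP hη0.le hη1 hf
  exact ⟨hsummable, htsum, tendsto_norm_atTop_zero_of_summable_sq hsummable⟩
end

section
/- Let B_u, B_v ∈ ℝ^{n×p} be matrices with full column rank whose smallest singular values are at least δ > 0 (i.e., ‖B_w x‖₂ ≥ δ ‖x‖₂ for all x ∈ ℝ^p and w ∈ {u,v}) and whose ℓ²-operator norms satisfy ‖B_u‖₂ ≤ M and ‖B_v‖₂ ≤ M for some M > 0. Define the pseudoinverse B_w⁺ = (B_wᵀ B_w)⁻¹ B_wᵀ and the orthogonal projector A_w = B_w B_w⁺ onto the column space of B_w, for w ∈ {u,v}. Then ‖A_u − A_v‖₂ ≤ (2/δ)(1 + c M²/δ²) ‖B_u − B_v‖₂, where c = (1+√5)/2. -/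
open Matrix
open scoped Matrix.Norms.L2Operator

/-- The Moore–Penrose pseudoinverse of a full-column-rank matrix: `B⁺ = (BᵀB)⁻¹Bᵀ`. -/
noncomputable def pinvFCR {n p : ℕ} (B : Matrix (Fin n) (Fin p) ℝ) :
    Matrix (Fin p) (Fin n) ℝ :=
  (Bᵀ * B)⁻¹ * Bᵀ

/-!
Write `P = B_u B_u⁺` and `Q = B_v B_v⁺`, both orthogonal projections, so that
`P - Q = P (1 - Q) - (1 - P) Q` with `P (1 - Q) = ((1 - Q) P)ᵀ`. Since `(1 - P) B_u = 0`, we have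
`(1 - P) Q = (1 - P) (B_v - B_u) B_v⁺`, and `‖1 - P‖ ≤ 1`, `‖B_v⁺‖ ≤ 1/δ`. Together with the
symmetric estimate this gives the sharper bound `‖P - Q‖ ≤ (2/δ) ‖B_u - B_v‖`.
-/

section LowerBound

variable {m k : Type*} [Fintype m] [Fintype k] [DecidableEq k]

lemma mulVec_injective_of_lowerBound (A : Matrix m k ℝ) {δ : ℝ} (hδ : 0 < δ)
    (hσ : ∀ x : EuclideanSpace ℝ k, δ * ‖x‖ ≤ ‖mulVecE A x‖) : Function.Injective A.mulVec := by
  refine (injective_iff_map_eq_zero A.mulVecLin).mpr fun x hx => ?_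
  have h := hσ (WithLp.toLp 2 x)
  rw [mulVecE, toLpLin_toLp, toLin'_apply, show A *ᵥ x = 0 from hx, WithLp.toLp_zero,
    norm_zero, ← mul_zero δ] at h
  simpa using le_of_mul_le_mul_left h hδ

lemma isUnit_transpose_mul_self_of_lowerBound (A : Matrix m k ℝ) {δ : ℝ} (hδ : 0 < δ)
    (hσ : ∀ x : EuclideanSpace ℝ k, δ * ‖x‖ ≤ ‖mulVecE A x‖) : IsUnit (Aᵀ * A) := by
  rw [← mulVec_injective_iff_isUnit, ← coe_mulVecLin, ← LinearMap.ker_eq_bot,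
    ker_mulVecLin_transpose_mul_self, LinearMap.ker_eq_bot, coe_mulVecLin]
  exact mulVec_injective_of_lowerBound A hδ hσ

end LowerBound

lemma mulVecE_mul {l m k : Type*} [Fintype l] [Fintype m] [Fintype k] [DecidableEq m]
    [DecidableEq k]
    (A : Matrix l m ℝ) (B : Matrix m k ℝ) (x : EuclideanSpace ℝ k) :
    mulVecE (A * B) x = mulVecE A (mulVecE B x) := by
  simp [mulVecE]

lemma norm_sub_le_of_isSelfAdjoint {E : Type*} [NormedRing E] [StarRing E] [NormedStarGroup E]
    {P Q : E} (hP : IsSelfAdjoint P) (hQ : IsSelfAdjoint Q) :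
    ‖P - Q‖ ≤ ‖(1 - Q) * P‖ + ‖(1 - P) * Q‖ := by
  have hstar : star ((1 - Q) * P) = P * (1 - Q) := by
    rw [star_mul, star_sub, star_one, hP.star_eq, hQ.star_eq]
  calc ‖P - Q‖ = ‖P * (1 - Q) - (1 - P) * Q‖ := by noncomm_ring
    _ ≤ ‖P * (1 - Q)‖ + ‖(1 - P) * Q‖ := norm_sub_le _ _
    _ = ‖(1 - Q) * P‖ + ‖(1 - P) * Q‖ := by rw [← hstar, norm_star]

section Pseudoinverse

variable {n p : ℕ} {B : Matrix (Fin n) (Fin p) ℝ}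

lemma pinvFCR_mul_self (hB : IsUnit (Bᵀ * B)) : pinvFCR B * B = 1 := by
  rw [pinvFCR, Matrix.mul_assoc, nonsing_inv_mul _ ((isUnit_iff_isUnit_det _).mp hB)]

lemma isStarProjection_mul_pinvFCR (hB : IsUnit (Bᵀ * B)) : IsStarProjection (B * pinvFCR B) where
  isIdempotentElem := by
    rw [IsIdempotentElem, Matrix.mul_assoc, ← Matrix.mul_assoc (pinvFCR B), pinvFCR_mul_self hB,
      Matrix.one_mul]
  isSelfAdjoint := by
    rw [IsSelfAdjoint, star_eq_conjTranspose, conjTranspose_eq_transpose_of_trivial, pinvFCR,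
      transpose_mul, transpose_mul, transpose_nonsing_inv, transpose_mul, transpose_transpose,
      Matrix.mul_assoc]

lemma one_sub_mul_pinvFCR_mul_self (hB : IsUnit (Bᵀ * B)) : (1 - B * pinvFCR B) * B = 0 := by
  rw [Matrix.sub_mul, Matrix.mul_assoc, pinvFCR_mul_self hB, Matrix.one_mul, Matrix.mul_one,
    sub_self]

lemma norm_pinvFCR_le {δ : ℝ} (hδ : 0 < δ)
    (hσ : ∀ x : EuclideanSpace ℝ (Fin p), δ * ‖x‖ ≤ ‖mulVecE B x‖) : ‖pinvFCR B‖ ≤ δ⁻¹ := by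
  have hB := isUnit_transpose_mul_self_of_lowerBound B hδ hσ
  rw [l2_opNorm_def]
  refine ContinuousLinearMap.opNorm_le_bound _ (inv_nonneg.mpr hδ.le) fun y => ?_
  rw [inv_mul_eq_div, le_div_iff₀ hδ, mul_comm]
  calc δ * ‖mulVecE (pinvFCR B) y‖ ≤ ‖mulVecE (B * pinvFCR B) y‖ := by
        rw [mulVecE_mul]; exact hσ _
    _ ≤ ‖B * pinvFCR B‖ * ‖y‖ := l2_opNorm_mulVec _ y
    _ ≤ ‖y‖ := mul_le_of_le_one_left (norm_nonneg y) ((isStarProjection_mul_pinvFCR hB).norm_le)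

lemma norm_one_sub_mul_pinvFCR_mul_le {Bu Bv : Matrix (Fin n) (Fin p) ℝ} (hu : IsUnit (Buᵀ * Bu))
    {δ : ℝ} (hδ : 0 < δ) (hσv : ∀ x : EuclideanSpace ℝ (Fin p), δ * ‖x‖ ≤ ‖mulVecE Bv x‖) :
    ‖(1 - Bu * pinvFCR Bu) * (Bv * pinvFCR Bv)‖ ≤ ‖Bu - Bv‖ / δ := by
  calc ‖(1 - Bu * pinvFCR Bu) * (Bv * pinvFCR Bv)‖
        = ‖(1 - Bu * pinvFCR Bu) * (Bv - Bu) * pinvFCR Bv‖ := by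
          rw [Matrix.mul_sub, one_sub_mul_pinvFCR_mul_self hu, sub_zero, Matrix.mul_assoc]
    _ ≤ ‖1 - Bu * pinvFCR Bu‖ * ‖Bv - Bu‖ * ‖pinvFCR Bv‖ :=
        (l2_opNorm_mul _ _).trans (by gcongr; exact l2_opNorm_mul _ _)
    _ ≤ 1 * ‖Bu - Bv‖ * δ⁻¹ := by
        rw [norm_sub_rev Bv]
        gcongr
        · exact (isStarProjection_mul_pinvFCR hu).one_sub.norm_le
        · exact norm_pinvFCR_le hδ hσv
    _ = ‖Bu - Bv‖ / δ := by ring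

end Pseudoinverse

theorem projector_perturbation_bound_general
    {n p : ℕ} (Bu Bv : Matrix (Fin n) (Fin p) ℝ) (δ M : ℝ) (hδ : 0 < δ)
    (hσu : ∀ x : EuclideanSpace ℝ (Fin p), δ * ‖x‖ ≤ ‖mulVecE Bu x‖)
    (hσv : ∀ x : EuclideanSpace ℝ (Fin p), δ * ‖x‖ ≤ ‖mulVecE Bv x‖) :
    ‖Bu * pinvFCR Bu - Bv * pinvFCR Bv‖ ≤
      (2 / δ) * (1 + (1 + Real.sqrt 5) / 2 * (M ^ 2 / δ ^ 2)) * ‖Bu - Bv‖ := by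
  have hu := isUnit_transpose_mul_self_of_lowerBound Bu hδ hσu
  have hv := isUnit_transpose_mul_self_of_lowerBound Bv hδ hσv
  calc ‖Bu * pinvFCR Bu - Bv * pinvFCR Bv‖
        ≤ ‖(1 - Bv * pinvFCR Bv) * (Bu * pinvFCR Bu)‖
          + ‖(1 - Bu * pinvFCR Bu) * (Bv * pinvFCR Bv)‖ :=
        norm_sub_le_of_isSelfAdjoint (isStarProjection_mul_pinvFCR hu).isSelfAdjoint
          (isStarProjection_mul_pinvFCR hv).isSelfAdjoint
    _ ≤ ‖Bv - Bu‖ / δ + ‖Bu - Bv‖ / δ :=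
        add_le_add (norm_one_sub_mul_pinvFCR_mul_le hv hδ hσu)
          (norm_one_sub_mul_pinvFCR_mul_le hu hδ hσv)
    _ = 2 / δ * 1 * ‖Bu - Bv‖ := by rw [norm_sub_rev]; ring
    _ ≤ _ := by gcongr; exact le_add_of_nonneg_right (by positivity)

/-- **Lipschitz perturbation bound for orthogonal projectors onto column spaces.**
If `B_u, B_v` have smallest singular values at least `δ > 0` (so in particular full column
rank) and ℓ²-operator norms at most `M`, then with `A_w = B_w B_w⁺` the orthogonal projectors
onto the column spaces,
`‖A_u - A_v‖₂ ≤ (2/δ)(1 + c M²/δ²) ‖B_u - B_v‖₂` where `c = (1+√5)/2`. -/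
theorem projector_perturbation_bound
    {n p : ℕ} (Bu Bv : Matrix (Fin n) (Fin p) ℝ) (δ M : ℝ) (hδ : 0 < δ) (hM : 0 < M)
    (hσu : ∀ x : EuclideanSpace ℝ (Fin p), δ * ‖x‖ ≤ ‖mulVecE Bu x‖)
    (hσv : ∀ x : EuclideanSpace ℝ (Fin p), δ * ‖x‖ ≤ ‖mulVecE Bv x‖)
    (hMu : ‖Bu‖ ≤ M) (hMv : ‖Bv‖ ≤ M) :
    ‖Bu * pinvFCR Bu - Bv * pinvFCR Bv‖ ≤
      (2 / δ) * (1 + (1 + Real.sqrt 5) / 2 * (M ^ 2 / δ ^ 2)) * ‖Bu - Bv‖ :=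
  projector_perturbation_bound_general Bu Bv δ M hδ hσu hσv
end

section
/- For the multicalibration boosting dynamics with relaxed rescaling weights w_t ∈ (0,1], the residual norm satisfies, for every t ≥ 0, ‖y − f_t‖₂ ≤ ρ_t ‖y − f₀‖₂ + (1 − ρ_t) ‖y‖₂, where ρ_t = ∏_{s=0}^{t−1} w_s (with ρ₀ = 1). -/
open Matrix
open scoped BigOperators

/-!
The residual satisfies `y - f_{t+1} = w_t (I - η A(f_t)) (y - f_t) + (1 - w_t) y`. As `A(f_t)` is
an orthogonal projection and `0 < η ≤ 1`, the map `I - η A(f_t)` is a contraction, so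
`‖y - f_{t+1}‖ ≤ w_t ‖y - f_t‖ + (1 - w_t) ‖y‖`; unrolling this affine recursion gives the bound.
-/

open scoped RealInnerProductSpace

section InnerProductSpace

variable {E : Type*} [NormedAddCommGroup E] [InnerProductSpace ℝ E]

theorem LinearMap.IsSymmetricProjection.real_inner_map_eq_norm_sq {p : E →ₗ[ℝ] E}
    (hp : p.IsSymmetricProjection) (v : E) : ⟪v, p v⟫ = ‖p v‖ ^ 2 := by
  rw [← real_inner_self_eq_norm_sq, hp.isSymmetric, ← Module.End.mul_apply,
    hp.isIdempotentElem.eq]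

theorem LinearMap.IsSymmetricProjection.norm_sub_smul_apply_le {p : E →ₗ[ℝ] E}
    (hp : p.IsSymmetricProjection) {η : ℝ} (hη0 : 0 ≤ η) (hη2 : η ≤ 2) (v : E) :
    ‖v - η • p v‖ ≤ ‖v‖ := by
  have hsq : ‖v - η • p v‖ ^ 2 = ‖v‖ ^ 2 - η * (2 - η) * ‖p v‖ ^ 2 := by
    rw [norm_sub_sq_real, real_inner_smul_right, hp.real_inner_map_eq_norm_sq, norm_smul,
      Real.norm_of_nonneg hη0]
    ring
  refine pow_le_pow_iff_left₀ (norm_nonneg _) (norm_nonneg _) two_ne_zero |>.mp ?_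
  rw [hsq]
  have hdecrease : 0 ≤ η * (2 - η) * ‖p v‖ ^ 2 := by
    have := sub_nonneg.mpr hη2
    positivity
  linarith

end InnerProductSpace

theorem Matrix.isSymmetricProjection_toEuclideanLin_s9 {n : Type*} [Fintype n] [DecidableEq n]
    {P : Matrix n n ℝ} (hsymm : Pᵀ = P) (hidem : P * P = P) :
    (toEuclideanLin P).IsSymmetricProjection := by
  have hP : IsStarProjection P :=
    ⟨hidem, by rwa [IsSelfAdjoint, star_eq_conjTranspose, conjTranspose_eq_transpose_of_trivial]⟩
  exact ContinuousLinearMap.IsStarProjection.isSymmetricProjection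
    ⟨hP.isIdempotentElem.map (toEuclideanCLM (n := n) (𝕜 := ℝ)),
      hP.isSelfAdjoint.map (toEuclideanCLM (n := n) (𝕜 := ℝ))⟩

theorem norm_sub_smul_le {E : Type*} [SeminormedAddCommGroup E] [NormedSpace ℝ E]
    {w : ℝ} (hw0 : 0 ≤ w) (hw1 : w ≤ 1) (x y : E) :
    ‖y - w • x‖ ≤ w * ‖y - x‖ + (1 - w) * ‖y‖ :=
  calc ‖y - w • x‖ = ‖w • (y - x) + (1 - w) • y‖ := by congr 1; module
    _ ≤ ‖w • (y - x)‖ + ‖(1 - w) • y‖ := norm_add_le _ _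
    _ = w * ‖y - x‖ + (1 - w) * ‖y‖ := by
      rw [norm_smul, norm_smul, Real.norm_of_nonneg hw0, Real.norm_of_nonneg (by linarith)]

theorem le_prod_range_mul_add_one_sub_prod_mul {r w : ℕ → ℝ} {c : ℝ} (hw : ∀ t, 0 ≤ w t)
    (hstep : ∀ t, r (t + 1) ≤ w t * r t + (1 - w t) * c) (t : ℕ) :
    r t ≤ (∏ s ∈ Finset.range t, w s) * r 0 + (1 - ∏ s ∈ Finset.range t, w s) * c := by
  induction t with
  | zero => simp
  | succ t ih =>
    calc r (t + 1) ≤ w t * r t + (1 - w t) * c := hstep t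
      _ ≤ w t * ((∏ s ∈ Finset.range t, w s) * r 0 + (1 - ∏ s ∈ Finset.range t, w s) * c)
          + (1 - w t) * c := by gcongr; exact hw t
      _ = _ := by rw [Finset.prod_range_succ]; ring

/-- **Residual bound for multicalibration boosting with relaxed rescaling weights.**
For the dynamics `f_{t+1} = w_t (f_t + η A(f_t)(y - f_t))` with weights `w_t ∈ (0,1]` and
orthogonal projections `A(f)`, for every `t ≥ 0`:
`‖y - f_t‖₂ ≤ ρ_t ‖y - f₀‖₂ + (1 - ρ_t) ‖y‖₂` where `ρ_t = ∏_{s<t} w_s`. -/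
theorem multicalibration_boosting_relaxed_residual_bound
    {n : ℕ} (y : EuclideanSpace ℝ (Fin n)) (η : ℝ) (hη0 : 0 < η) (hη1 : η ≤ 1)
    (w : ℕ → ℝ) (hw : ∀ t, w t ∈ Set.Ioc (0 : ℝ) 1)
    (A : EuclideanSpace ℝ (Fin n) → Matrix (Fin n) (Fin n) ℝ)
    (hAsymm : ∀ f, (A f)ᵀ = A f) (hAproj : ∀ f, A f * A f = A f)
    (f : ℕ → EuclideanSpace ℝ (Fin n))
    (hf : ∀ t, f (t + 1) = w t • (f t + η • mulVecE (A (f t)) (y - f t))) :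
    ∀ t : ℕ,
      ‖y - f t‖ ≤ (∏ s ∈ Finset.range t, w s) * ‖y - f 0‖ +
        (1 - ∏ s ∈ Finset.range t, w s) * ‖y‖ := by
  refine le_prod_range_mul_add_one_sub_prod_mul (fun t ↦ (hw t).1.le) fun t ↦ ?_
  have hcontract : ‖(y - f t) - η • mulVecE (A (f t)) (y - f t)‖ ≤ ‖y - f t‖ :=
    (isSymmetricProjection_toEuclideanLin_s9 (hAsymm (f t)) (hAproj (f t))).norm_sub_smul_apply_le
      hη0.le (by linarith) _
  calc ‖y - f (t + 1)‖
      ≤ w t * ‖y - (f t + η • mulVecE (A (f t)) (y - f t))‖ + (1 - w t) * ‖y‖ := by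
        rw [hf t]; exact norm_sub_smul_le (hw t).1.le (hw t).2 _ _
    _ ≤ w t * ‖y - f t‖ + (1 - w t) * ‖y‖ := by
        rw [sub_add_eq_sub_sub]; gcongr; exact (hw t).1.le
end

section
/- For the multicalibration boosting dynamics with relaxed rescaling weights w_t ∈ (0,1] satisfying ∑_{t=0}^{∞} (1 − w_t) < ∞, the gap between successive predictions converges to zero: ‖f_{t+1} − f_t‖₂ → 0 as t → ∞. -/
open Matrix
open scoped BigOperators
open scoped RealInnerProductSpace

set_option maxHeartbeats 1000000

/-- For a symmetric idempotent matrix, `⟪v, A v⟫ = ‖A v‖²`. -/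
lemma inner_proj_eq_norm_sq {n : ℕ} (A : Matrix (Fin n) (Fin n) ℝ) (hs : Aᵀ = A)
    (hp : A * A = A) (v : EuclideanSpace ℝ (Fin n)) :
    ⟪v, mulVecE A v⟫ = ‖mulVecE A v‖^2 := by
  have hH : Aᴴ = A := by
    ext i j
    simpa [Matrix.conjTranspose_apply] using congrFun (congrFun hs i) j
  have hadj : LinearMap.adjoint (Matrix.toEuclideanLin A) = Matrix.toEuclideanLin A := by
    rw [← Matrix.toEuclideanLin_conjTranspose_eq_adjoint, hH]
  have hidem : Matrix.toEuclideanLin A (Matrix.toEuclideanLin A v)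
      = Matrix.toEuclideanLin A v := by
    have := congrArg (fun M => Matrix.toEuclideanLin M v) hp
    simpa [Matrix.toEuclideanLin_apply, Matrix.mulVec_mulVec] using this
  calc ⟪v, mulVecE A v⟫
      = ⟪v, Matrix.toEuclideanLin A (Matrix.toEuclideanLin A v)⟫ := by rw [hidem]; rfl
    _ = ⟪LinearMap.adjoint (Matrix.toEuclideanLin A) v, Matrix.toEuclideanLin A v⟫ := by
        rw [LinearMap.adjoint_inner_left]
    _ = ‖mulVecE A v‖^2 := by rw [hadj]; exact real_inner_self_eq_norm_sq _

/-- **Vanishing gaps for multicalibration boosting with relaxed rescaling weights.**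
For the dynamics `f_{t+1} = w_t (f_t + η A(f_t)(y - f_t))` with weights `w_t ∈ (0,1]`
satisfying `∑_t (1 - w_t) < ∞`, the gap between successive predictions converges to zero:
`‖f_{t+1} - f_t‖₂ → 0`. -/
theorem multicalibration_boosting_relaxed_gap_tendsto_zero
    {n : ℕ} (y : EuclideanSpace ℝ (Fin n)) (η : ℝ) (hη0 : 0 < η) (hη1 : η ≤ 1)
    (w : ℕ → ℝ) (hw : ∀ t, w t ∈ Set.Ioc (0 : ℝ) 1)
    (hsum : Summable (fun t : ℕ => 1 - w t))
    (A : EuclideanSpace ℝ (Fin n) → Matrix (Fin n) (Fin n) ℝ)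
    (hAsymm : ∀ f, (A f)ᵀ = A f) (hAproj : ∀ f, A f * A f = A f)
    (f : ℕ → EuclideanSpace ℝ (Fin n))
    (hf : ∀ t, f (t + 1) = w t • (f t + η • mulVecE (A (f t)) (y - f t))) :
    Filter.Tendsto (fun t : ℕ => ‖f (t + 1) - f t‖) Filter.atTop (nhds 0) := by
  set e : ℕ → EuclideanSpace ℝ (Fin n) := fun t => y - f t with he
  set p : ℕ → EuclideanSpace ℝ (Fin n) := fun t => mulVecE (A (f t)) (e t) with hpdef
  set g : ℕ → EuclideanSpace ℝ (Fin n) := fun t => f t + η • p t with hg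
  set d : ℕ → ℝ := fun t => 1 - w t with hd
  have hd0 : ∀ t, 0 ≤ d t := fun t => by have := (hw t).2; simp [hd]; linarith
  have hd1 : ∀ t, d t ≤ 1 := fun t => by have := (hw t).1; simp [hd]; linarith
  have hfg : ∀ t, f (t + 1) = w t • g t := fun t => hf t
  -- key inner product identity
  have hinner : ∀ t, ⟪e t, p t⟫ = ‖p t‖^2 := fun t =>
    inner_proj_eq_norm_sq (A (f t)) (hAsymm _) (hAproj _) (e t)
  -- y - g t = e t - η • p t
  have hyg : ∀ t, y - g t = e t - η • p t := by
    intro t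
    show y - (f t + η • p t) = (y - f t) - η • p t
    abel
  -- norm identity
  have hnormyg : ∀ t, ‖y - g t‖^2 = ‖e t‖^2 - (η * (2 - η)) * ‖p t‖^2 := by
    intro t
    rw [hyg t, norm_sub_sq_real, real_inner_smul_right, hinner t, norm_smul]
    rw [Real.norm_eq_abs, abs_of_pos hη0]
    ring
  have hc : 0 < η * (2 - η) := mul_pos hη0 (by linarith)
  have hyg_le : ∀ t, ‖y - g t‖ ≤ ‖e t‖ := by
    intro t
    have h1 : ‖y - g t‖^2 ≤ ‖e t‖^2 := by
      rw [hnormyg t]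
      nlinarith [sq_nonneg ‖p t‖, hc.le]
    nlinarith [norm_nonneg (y - g t), norm_nonneg (e t)]
  have hgbound : ∀ t, ‖g t‖ ≤ ‖y‖ + ‖e t‖ := by
    intro t
    calc ‖g t‖ = ‖y - (y - g t)‖ := by congr 1; abel
      _ ≤ ‖y‖ + ‖y - g t‖ := norm_sub_le _ _
      _ ≤ ‖y‖ + ‖e t‖ := by linarith [hyg_le t]
  -- decomposition of the next error
  have hesplit : ∀ t, e (t + 1) = (y - g t) + d t • g t := by
    intro t
    show y - f (t + 1) = (y - g t) + (1 - w t) • g t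
    rw [hfg t, sub_smul, one_smul]
    abel
  have hestep : ∀ t, ‖e (t + 1)‖ ≤ ‖y - g t‖ + d t * ‖g t‖ := by
    intro t
    rw [hesplit t]
    calc ‖(y - g t) + d t • g t‖ ≤ ‖y - g t‖ + ‖d t • g t‖ := norm_add_le _ _
      _ = ‖y - g t‖ + d t * ‖g t‖ := by
          rw [norm_smul, Real.norm_eq_abs, abs_of_nonneg (hd0 t)]
  -- uniform bound on ‖e t‖
  set D : ℝ := ∑' t, d t with hD
  have hdsum : Summable d := hsum
  have hD0 : 0 ≤ D := tsum_nonneg hd0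
  set M : ℝ := (‖e 0‖ + ‖y‖) * Real.exp D with hM
  have hM0 : 0 ≤ M :=
    mul_nonneg (by positivity) (Real.exp_pos _).le
  have hebound : ∀ t, ‖e t‖ ≤ M := by
    have key : ∀ t, ‖e t‖ + ‖y‖ ≤ (‖e 0‖ + ‖y‖) * Real.exp (∑ i ∈ Finset.range t, d i) := by
      intro t
      induction t with
      | zero => simp
      | succ t ih =>
        have h1 : ‖e (t + 1)‖ + ‖y‖ ≤ (1 + d t) * (‖e t‖ + ‖y‖) := by
          have h2 := hestep t
          have h3 := hgbound t
          have h4 := hyg_le t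
          have := hd0 t
          nlinarith [norm_nonneg (e t), norm_nonneg y]
        have h5 : (1 + d t) ≤ Real.exp (d t) := by linarith [Real.add_one_le_exp (d t)]
        calc ‖e (t + 1)‖ + ‖y‖ ≤ (1 + d t) * (‖e t‖ + ‖y‖) := h1
          _ ≤ Real.exp (d t) * ((‖e 0‖ + ‖y‖) * Real.exp (∑ i ∈ Finset.range t, d i)) := by
              apply mul_le_mul h5 ih (by positivity) (Real.exp_pos _).le
          _ = (‖e 0‖ + ‖y‖) * Real.exp (∑ i ∈ Finset.range (t + 1), d i) := by
              rw [Finset.sum_range_succ, Real.exp_add]; ring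
    intro t
    have h6 : (∑ i ∈ Finset.range t, d i) ≤ D := Summable.sum_le_tsum (Finset.range t) (fun i _ => hd0 i) hdsum
    have h7 := key t
    have h8 : Real.exp (∑ i ∈ Finset.range t, d i) ≤ Real.exp D := Real.exp_le_exp.mpr h6
    have : (‖e 0‖ + ‖y‖) * Real.exp (∑ i ∈ Finset.range t, d i) ≤ M := by
      rw [hM]; apply mul_le_mul_of_nonneg_left h8 (by positivity)
    linarith [norm_nonneg y]
  set G : ℝ := ‖y‖ + M with hG
  have hG0 : 0 ≤ G := by positivity
  have hgG : ∀ t, ‖g t‖ ≤ G := fun t => (hgbound t).trans (by linarith [hebound t])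
  -- per-step summability inequality
  set K : ℝ := 2 * G * M + G ^ 2 with hK
  have hstep : ∀ t, (η * (2 - η)) * ‖p t‖^2 ≤ ‖e t‖^2 - ‖e (t + 1)‖^2 + K * d t := by
    intro t
    have h1 : ‖e (t + 1)‖ ≤ ‖y - g t‖ + d t * G := by
      have := hestep t
      have h2 := mul_le_mul_of_nonneg_left (hgG t) (hd0 t)
      linarith
    have h3 : ‖e (t + 1)‖^2 ≤ (‖y - g t‖ + d t * G)^2 := by
      apply pow_le_pow_left₀ (norm_nonneg _) h1
    have h4 : ‖y - g t‖ ≤ M := (hyg_le t).trans (hebound t)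
    have h5 := hnormyg t
    have h6 := hd0 t
    have h7 := hd1 t
    have h8 : d t * G * ‖y - g t‖ ≤ d t * G * M :=
      mul_le_mul_of_nonneg_left h4 (mul_nonneg h6 hG0)
    have hdd : d t * d t ≤ d t * 1 := mul_le_mul_of_nonneg_left h7 h6
    have h9 : (d t * G)^2 ≤ d t * G^2 := by
      nlinarith [mul_le_mul_of_nonneg_right hdd (sq_nonneg G)]
    nlinarith [h3, h8, h9]
  -- summability of ‖p t‖²
  have hpsum : Summable (fun t => ‖p t‖^2) := by
    apply summable_of_sum_range_le (c := (‖e 0‖^2 + K * D) / (η * (2 - η)))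
      (fun t => sq_nonneg _)
    intro N
    rw [le_div_iff₀ hc]
    have htel : ∑ i ∈ Finset.range N, (‖e i‖^2 - ‖e (i + 1)‖^2) = ‖e 0‖^2 - ‖e N‖^2 :=
      Finset.sum_range_sub' (fun i => ‖e i‖^2) N
    have hKD : K * (∑ i ∈ Finset.range N, d i) ≤ K * D := by
      apply mul_le_mul_of_nonneg_left (Summable.sum_le_tsum (Finset.range N) (fun i _ => hd0 i) hdsum)
      positivity
    calc (∑ i ∈ Finset.range N, ‖p i‖^2) * (η * (2 - η))
        = ∑ i ∈ Finset.range N, (η * (2 - η)) * ‖p i‖^2 := by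
          rw [Finset.sum_mul]; congr 1; ext i; ring
      _ ≤ ∑ i ∈ Finset.range N, (‖e i‖^2 - ‖e (i + 1)‖^2 + K * d i) :=
          Finset.sum_le_sum (fun i _ => hstep i)
      _ = (‖e 0‖^2 - ‖e N‖^2) + K * (∑ i ∈ Finset.range N, d i) := by
          rw [Finset.sum_add_distrib, htel, Finset.mul_sum]
      _ ≤ ‖e 0‖^2 + K * D := by nlinarith [sq_nonneg ‖e N‖]
  have hp2 : Filter.Tendsto (fun t => ‖p t‖^2) Filter.atTop (nhds 0) :=
    hpsum.tendsto_atTop_zero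
  have hpto : Filter.Tendsto (fun t => ‖p t‖) Filter.atTop (nhds 0) := by
    have h1 := (Real.continuous_sqrt.tendsto 0).comp hp2
    simp only [Function.comp_def, Real.sqrt_zero] at h1
    have h2 : (fun t => Real.sqrt (‖p t‖ ^ 2)) = fun t => ‖p t‖ := by
      funext t; exact Real.sqrt_sq (norm_nonneg _)
    rwa [h2] at h1
  have hdto : Filter.Tendsto d Filter.atTop (nhds 0) := hdsum.tendsto_atTop_zero
  -- gap bound and squeeze
  have hgap : ∀ t, ‖f (t + 1) - f t‖ ≤ η * ‖p t‖ + d t * G := by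
    intro t
    have hsplit : f (t + 1) - f t = η • p t + (-(d t)) • g t := by
      rw [hfg t]
      show w t • g t - f t = η • p t + (-(1 - w t)) • g t
      rw [hg]
      simp only [neg_smul, sub_smul, one_smul]
      abel
    rw [hsplit]
    calc ‖η • p t + (-(d t)) • g t‖ ≤ ‖η • p t‖ + ‖(-(d t)) • g t‖ := norm_add_le _ _
      _ = η * ‖p t‖ + d t * ‖g t‖ := by
          rw [norm_smul, norm_smul, Real.norm_eq_abs, Real.norm_eq_abs, abs_of_pos hη0,
            abs_neg, abs_of_nonneg (hd0 t)]
      _ ≤ η * ‖p t‖ + d t * G := by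
          have := mul_le_mul_of_nonneg_left (hgG t) (hd0 t); linarith
  have hbound_to : Filter.Tendsto (fun t => η * ‖p t‖ + d t * G) Filter.atTop (nhds 0) := by
    have h1 : Filter.Tendsto (fun t => η * ‖p t‖) Filter.atTop (nhds 0) := by
      simpa using hpto.const_mul η
    have h2 : Filter.Tendsto (fun t => d t * G) Filter.atTop (nhds 0) := by
      simpa using hdto.mul_const G
    simpa using h1.add h2
  exact squeeze_zero (fun t => norm_nonneg _) hgap hbound_to
end

section
/- For the multicalibration boosting dynamics with relaxed rescaling weights w_t ∈ (0,1] satisfying C_w := ∑_{t=0}^{∞} (1 − w_t) < ∞, set C̃_w := ∑_{t=0}^{∞} (1 − w_t)², ρ := max{2‖y‖₂², (‖y‖₂ + ‖y − f₀‖₂)‖y − f₀‖₂}, ρ̃ := ‖y‖₂ + max{‖y − f₀‖₂, ‖y‖₂}, and K := η‖y − f₀‖₂² + 2ηρC_w + 2√(η‖y − f₀‖₂² + 2ηρC_w) · ρ̃√(C̃_w) + ρ̃² C̃_w. Then for every integer T ≥ 1, min_{0 ≤ t ≤ T−1} ‖f_{t+1} − f_t‖₂ ≤ √(K/T). -/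
open Matrix
open scoped BigOperators
open scoped RealInnerProductSpace

lemma proj_inner {n : ℕ} (P : Matrix (Fin n) (Fin n) ℝ) (hs : Pᵀ = P) (hp : P * P = P)
    (g : EuclideanSpace ℝ (Fin n)) :
    ⟪g, mulVecE P g⟫ = ‖mulVecE P g‖ ^ 2 := by
  have hadj : Matrix.toEuclideanLin P = LinearMap.adjoint (Matrix.toEuclideanLin P) := by
    rw [← Matrix.toEuclideanLin_conjTranspose_eq_adjoint]
    congr 1
    rw [conjTranspose_eq_transpose_of_trivial, hs]
  have h1 : ⟪mulVecE P g, mulVecE P g⟫ = ⟪g, mulVecE P g⟫ := by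
    unfold mulVecE
    conv_lhs => rw [hadj]
    rw [LinearMap.adjoint_inner_left, ← hadj]
    rw [show Matrix.toEuclideanLin P (Matrix.toEuclideanLin P g)
        = Matrix.toEuclideanLin (P * P) g by
      simp [Matrix.toEuclideanLin_apply, Matrix.mulVec_mulVec]]
    rw [hp]
  rw [← h1, real_inner_self_eq_norm_sq]

set_option maxHeartbeats 1000000 in
/-- **O(1/√T) rate for the minimum gap under relaxed rescaling weights.**
For the dynamics `f_{t+1} = w_t (f_t + η A(f_t)(y - f_t))` with weights `w_t ∈ (0,1]`
satisfying `C_w = ∑_t (1 - w_t) < ∞`, set `C̃_w = ∑_t (1 - w_t)²`,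
`ρ = max {2‖y‖², (‖y‖ + ‖y - f₀‖)‖y - f₀‖}`, `ρ̃ = ‖y‖ + max {‖y - f₀‖, ‖y‖}`, and
`K = η‖y-f₀‖² + 2ηρC_w + 2√(η‖y-f₀‖² + 2ηρC_w)·ρ̃·√C̃_w + ρ̃²C̃_w`. Then for every `T ≥ 1`,
`min_{0 ≤ t ≤ T-1} ‖f_{t+1} - f_t‖₂ ≤ √(K/T)`. -/
theorem multicalibration_boosting_relaxed_min_gap_rate
    {n : ℕ} (y : EuclideanSpace ℝ (Fin n)) (η : ℝ) (hη0 : 0 < η) (hη1 : η ≤ 1)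
    (w : ℕ → ℝ) (hw : ∀ t, w t ∈ Set.Ioc (0 : ℝ) 1)
    (hsum : Summable (fun t : ℕ => 1 - w t))
    (A : EuclideanSpace ℝ (Fin n) → Matrix (Fin n) (Fin n) ℝ)
    (hAsymm : ∀ f, (A f)ᵀ = A f) (hAproj : ∀ f, A f * A f = A f)
    (f : ℕ → EuclideanSpace ℝ (Fin n))
    (hf : ∀ t, f (t + 1) = w t • (f t + η • mulVecE (A (f t)) (y - f t)))
    (Cw Ctw ρ ρt K : ℝ)
    (hCw : Cw = ∑' t : ℕ, (1 - w t))
    (hCtw : Ctw = ∑' t : ℕ, (1 - w t) ^ 2)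
    (hρ : ρ = max (2 * ‖y‖ ^ 2) ((‖y‖ + ‖y - f 0‖) * ‖y - f 0‖))
    (hρt : ρt = ‖y‖ + max ‖y - f 0‖ ‖y‖)
    (hK : K = η * ‖y - f 0‖ ^ 2 + 2 * η * ρ * Cw +
        2 * Real.sqrt (η * ‖y - f 0‖ ^ 2 + 2 * η * ρ * Cw) * ρt * Real.sqrt Ctw +
        ρt ^ 2 * Ctw) :
    ∀ T : ℕ, ∀ hT : 1 ≤ T,
      (Finset.range T).inf'
          (Finset.nonempty_range_iff.mpr (Nat.one_le_iff_ne_zero.mp hT))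
          (fun t => ‖f (t + 1) - f t‖)
        ≤ Real.sqrt (K / T) := by
  intro T hT
  have hwpos : ∀ t, 0 < w t := fun t => (hw t).1
  have hwle : ∀ t, w t ≤ 1 := fun t => (hw t).2
  set g : ℕ → EuclideanSpace ℝ (Fin n) := fun t => y - f t with hgdef
  set q : ℕ → EuclideanSpace ℝ (Fin n) := fun t => mulVecE (A (f t)) (y - f t) with hqdef
  set u : ℕ → EuclideanSpace ℝ (Fin n) := fun t => f t + η • q t with hudef
  have hfu : ∀ t, f (t + 1) = w t • u t := fun t => hf t
  set M : ℝ := max ‖y - f 0‖ ‖y‖ with hMdef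
  have hg0 : g 0 = y - f 0 := rfl
  -- inner-product identity
  have hinner : ∀ t, ⟪g t, q t⟫ = ‖q t‖ ^ 2 := fun t =>
    proj_inner (A (f t)) (hAsymm _) (hAproj _) (y - f t)
  -- contraction of the projected step
  have hyu : ∀ t, ‖y - u t‖ ^ 2 ≤ ‖g t‖ ^ 2 - η * ‖q t‖ ^ 2 := by
    intro t
    have hexp : y - u t = g t - η • q t := by
      show y - (f t + η • q t) = (y - f t) - η • q t
      abel
    rw [hexp, norm_sub_sq_real, real_inner_smul_right, hinner t, norm_smul,
      Real.norm_eq_abs, abs_of_pos hη0]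
    nlinarith [sq_nonneg ‖q t‖]
  have hyule : ∀ t, ‖y - u t‖ ≤ ‖g t‖ := by
    intro t
    nlinarith [hyu t, mul_nonneg hη0.le (sq_nonneg ‖q t‖), norm_nonneg (y - u t),
      norm_nonneg (g t)]
  -- convexity step
  have hstep : ∀ t, g (t + 1) = w t • (y - u t) + (1 - w t) • y := by
    intro t
    show y - f (t + 1) = _
    rw [hfu t]
    module
  have hconv : ∀ t, ‖g (t + 1)‖ ^ 2 ≤ w t * ‖y - u t‖ ^ 2 + (1 - w t) * ‖y‖ ^ 2 := by
    intro t
    have tri : ‖g (t + 1)‖ ≤ w t * ‖y - u t‖ + (1 - w t) * ‖y‖ := by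
      rw [hstep t]
      refine (norm_add_le _ _).trans ?_
      rw [norm_smul, norm_smul, Real.norm_eq_abs, Real.norm_eq_abs,
        abs_of_pos (hwpos t), abs_of_nonneg (by linarith [hwle t])]
    nlinarith [tri, norm_nonneg (g (t + 1)), norm_nonneg (y - u t), norm_nonneg y,
      sq_nonneg (‖y - u t‖ - ‖y‖), hwpos t, hwle t,
      mul_nonneg (hwpos t).le (by linarith [hwle t] : (0:ℝ) ≤ 1 - w t)]
  -- uniform bounds
  have hMy : ‖y‖ ≤ M := le_max_right _ _
  have hM0 : (0:ℝ) ≤ M := le_trans (norm_nonneg y) hMy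
  have hgM : ∀ t, ‖g t‖ ≤ M := by
    intro t
    induction t with
    | zero => exact le_max_left _ _
    | succ t ih =>
      have h1 : ‖y - u t‖ ≤ M := (hyule t).trans ih
      have h2 := hconv t
      have e1 : ‖y - u t‖ ^ 2 ≤ M ^ 2 := pow_le_pow_left₀ (norm_nonneg _) h1 2
      have e2 : ‖y‖ ^ 2 ≤ M ^ 2 := pow_le_pow_left₀ (norm_nonneg _) hMy 2
      have e3 : w t * ‖y - u t‖ ^ 2 ≤ w t * M ^ 2 :=
        mul_le_mul_of_nonneg_left e1 (hwpos t).le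
      have e4 : (1 - w t) * ‖y‖ ^ 2 ≤ (1 - w t) * M ^ 2 :=
        mul_le_mul_of_nonneg_left e2 (by linarith [hwle t])
      have hsq : ‖g (t + 1)‖ ^ 2 ≤ M ^ 2 := by nlinarith
      nlinarith [norm_nonneg (g (t + 1))]
  have hρt0 : (0:ℝ) ≤ ρt := by rw [hρt]; positivity
  have huρt : ∀ t, ‖u t‖ ≤ ρt := by
    intro t
    have : u t = y - (y - u t) := by abel
    rw [this, hρt]
    exact (norm_sub_le _ _).trans (by have := (hyule t).trans (hgM t); rw [hMdef] at this; linarith)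
  -- nonnegativity of the constants
  have hw1 : ∀ t, (0:ℝ) ≤ 1 - w t := fun t => by linarith [hwle t]
  have hCw0 : 0 ≤ Cw := hCw ▸ tsum_nonneg hw1
  have hsum2 : Summable (fun t : ℕ => (1 - w t) ^ 2) := by
    refine Summable.of_nonneg_of_le (fun t => sq_nonneg _) (fun t => ?_) hsum
    nlinarith [hw1 t, hwpos t]
  have hCtw0 : 0 ≤ Ctw := hCtw ▸ tsum_nonneg (fun t => sq_nonneg _)
  have hρ0 : (0:ℝ) ≤ ρ := le_trans (by positivity) (hρ ▸ le_max_left _ _)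
  have hpCw : ∑ t ∈ Finset.range T, (1 - w t) ≤ Cw :=
    hCw ▸ Summable.sum_le_tsum _ (fun i _ => hw1 i) hsum
  have hpCtw : ∑ t ∈ Finset.range T, (1 - w t) ^ 2 ≤ Ctw :=
    hCtw ▸ Summable.sum_le_tsum _ (fun i _ => sq_nonneg _) hsum2
  -- telescoping bound
  have htel : η * ∑ t ∈ Finset.range T, ‖q t‖ ^ 2 ≤ ‖y - f 0‖ ^ 2 + ‖y‖ ^ 2 * Cw := by
    have key : ∀ t, η * ‖q t‖ ^ 2 ≤ (‖g t‖ ^ 2 - ‖g (t + 1)‖ ^ 2) + ‖y‖ ^ 2 * (1 - w t) := by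
      intro t
      have h1 := hconv t
      have h2 := hyu t
      nlinarith [mul_nonneg (hw1 t) (sq_nonneg ‖y - u t‖), hwle t, hwpos t]
    calc η * ∑ t ∈ Finset.range T, ‖q t‖ ^ 2
        = ∑ t ∈ Finset.range T, η * ‖q t‖ ^ 2 := Finset.mul_sum _ _ _
      _ ≤ ∑ t ∈ Finset.range T, ((‖g t‖ ^ 2 - ‖g (t + 1)‖ ^ 2) + ‖y‖ ^ 2 * (1 - w t)) :=
          Finset.sum_le_sum (fun t _ => key t)
      _ = (‖g 0‖ ^ 2 - ‖g T‖ ^ 2) + ‖y‖ ^ 2 * ∑ t ∈ Finset.range T, (1 - w t) := by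
          rw [Finset.sum_add_distrib, Finset.sum_range_sub' (fun t => ‖g t‖ ^ 2),
            ← Finset.mul_sum]
      _ ≤ ‖y - f 0‖ ^ 2 + ‖y‖ ^ 2 * Cw := by
          rw [hg0]
          nlinarith [sq_nonneg ‖g T‖, sq_nonneg ‖y‖, hpCw]
  set S : ℝ := η * ‖y - f 0‖ ^ 2 + 2 * η * ρ * Cw with hSdef
  have hS0 : 0 ≤ S := by positivity
  -- bound on the sum of squared projected steps
  have hsQ : ∑ t ∈ Finset.range T, ‖(η • q t : EuclideanSpace ℝ (Fin n))‖ ^ 2 ≤ S := by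
    have heq : ∀ t, ‖(η • q t : EuclideanSpace ℝ (Fin n))‖ ^ 2 = η ^ 2 * ‖q t‖ ^ 2 := by
      intro t
      rw [norm_smul, Real.norm_eq_abs, abs_of_pos hη0, mul_pow]
    have h2ρ : 2 * ‖y‖ ^ 2 ≤ ρ := hρ ▸ le_max_left _ _
    calc ∑ t ∈ Finset.range T, ‖(η • q t : EuclideanSpace ℝ (Fin n))‖ ^ 2
        = η * (η * ∑ t ∈ Finset.range T, ‖q t‖ ^ 2) := by
          simp_rw [heq]; rw [← Finset.mul_sum]; ring
      _ ≤ η * (‖y - f 0‖ ^ 2 + ‖y‖ ^ 2 * Cw) :=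
          mul_le_mul_of_nonneg_left htel hη0.le
      _ ≤ S := by
          rw [hSdef]
          nlinarith [mul_nonneg hη0.le hCw0, sq_nonneg ‖y‖]
  -- bound on the rescaling perturbation terms
  have hsB : ∑ t ∈ Finset.range T, ‖((1 - w t) • u t : EuclideanSpace ℝ (Fin n))‖ ^ 2
      ≤ ρt ^ 2 * Ctw := by
    calc ∑ t ∈ Finset.range T, ‖((1 - w t) • u t : EuclideanSpace ℝ (Fin n))‖ ^ 2
        ≤ ∑ t ∈ Finset.range T, ρt ^ 2 * (1 - w t) ^ 2 := by
          refine Finset.sum_le_sum (fun t _ => ?_)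
          rw [norm_smul, Real.norm_eq_abs, abs_of_nonneg (hw1 t), mul_pow]
          have := pow_le_pow_left₀ (norm_nonneg (u t)) (huρt t) 2
          nlinarith [sq_nonneg (1 - w t)]
      _ = ρt ^ 2 * ∑ t ∈ Finset.range T, (1 - w t) ^ 2 := by rw [← Finset.mul_sum]
      _ ≤ ρt ^ 2 * Ctw := mul_le_mul_of_nonneg_left hpCtw (sq_nonneg ρt)
  -- gap decomposition
  have hgap : ∀ t, f (t + 1) - f t = η • q t - (1 - w t) • u t := by
    intro t
    rw [hfu t]
    show w t • u t - f t = η • q t - (1 - w t) • u t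
    rw [hudef]
    module
  -- total bound on the sum of squared gaps
  have hcross : ∑ t ∈ Finset.range T,
      ‖(η • q t : EuclideanSpace ℝ (Fin n))‖ * ‖((1 - w t) • u t : EuclideanSpace ℝ (Fin n))‖
      ≤ Real.sqrt S * (ρt * Real.sqrt Ctw) := by
    refine (Real.sum_mul_le_sqrt_mul_sqrt _ _ _).trans ?_
    have h1 : Real.sqrt (∑ t ∈ Finset.range T,
        ‖(η • q t : EuclideanSpace ℝ (Fin n))‖ ^ 2) ≤ Real.sqrt S := Real.sqrt_le_sqrt hsQ
    have h2 : Real.sqrt (∑ t ∈ Finset.range T,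
        ‖((1 - w t) • u t : EuclideanSpace ℝ (Fin n))‖ ^ 2) ≤ ρt * Real.sqrt Ctw := by
      refine (Real.sqrt_le_sqrt hsB).trans ?_
      rw [Real.sqrt_mul (sq_nonneg ρt), Real.sqrt_sq hρt0]
    exact mul_le_mul h1 h2 (Real.sqrt_nonneg _) (Real.sqrt_nonneg _)
  have htot : ∑ t ∈ Finset.range T, ‖f (t + 1) - f t‖ ^ 2 ≤ K := by
    have hterm : ∀ t, ‖f (t + 1) - f t‖ ^ 2 ≤
        ‖(η • q t : EuclideanSpace ℝ (Fin n))‖ ^ 2 +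
        2 * (‖(η • q t : EuclideanSpace ℝ (Fin n))‖ *
          ‖((1 - w t) • u t : EuclideanSpace ℝ (Fin n))‖) +
        ‖((1 - w t) • u t : EuclideanSpace ℝ (Fin n))‖ ^ 2 := by
      intro t
      rw [hgap t]
      have tri := norm_sub_le (η • q t) ((1 - w t) • u t)
      nlinarith [norm_nonneg (η • q t - (1 - w t) • u t), norm_nonneg (η • q t),
        norm_nonneg ((1 - w t) • u t)]
    calc ∑ t ∈ Finset.range T, ‖f (t + 1) - f t‖ ^ 2
        ≤ ∑ t ∈ Finset.range T, (‖(η • q t : EuclideanSpace ℝ (Fin n))‖ ^ 2 +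
            2 * (‖(η • q t : EuclideanSpace ℝ (Fin n))‖ *
              ‖((1 - w t) • u t : EuclideanSpace ℝ (Fin n))‖) +
            ‖((1 - w t) • u t : EuclideanSpace ℝ (Fin n))‖ ^ 2) :=
          Finset.sum_le_sum (fun t _ => hterm t)
      _ = (∑ t ∈ Finset.range T, ‖(η • q t : EuclideanSpace ℝ (Fin n))‖ ^ 2) +
          2 * (∑ t ∈ Finset.range T, ‖(η • q t : EuclideanSpace ℝ (Fin n))‖ *
            ‖((1 - w t) • u t : EuclideanSpace ℝ (Fin n))‖) +
          (∑ t ∈ Finset.range T, ‖((1 - w t) • u t : EuclideanSpace ℝ (Fin n))‖ ^ 2) := by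
          rw [Finset.sum_add_distrib, Finset.sum_add_distrib, ← Finset.mul_sum]
      _ ≤ S + 2 * (Real.sqrt S * (ρt * Real.sqrt Ctw)) + ρt ^ 2 * Ctw := by
          linarith [hsQ, hsB, hcross]
      _ = K := by rw [hK]; ring
  -- conclude
  set m : ℝ := (Finset.range T).inf'
      (Finset.nonempty_range_iff.mpr (Nat.one_le_iff_ne_zero.mp hT))
      (fun t => ‖f (t + 1) - f t‖) with hmdef
  have hm0 : 0 ≤ m := Finset.le_inf' _ _ (fun t _ => norm_nonneg _)
  have hK0 : 0 ≤ K := le_trans (Finset.sum_nonneg (fun t _ => sq_nonneg _)) htot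
  have hT0 : (0:ℝ) < T := by exact_mod_cast Nat.lt_of_lt_of_le Nat.zero_lt_one hT
  have hTm : (T:ℝ) * m ^ 2 ≤ K := by
    calc (T:ℝ) * m ^ 2 = ∑ _t ∈ Finset.range T, m ^ 2 := by
          rw [Finset.sum_const, Finset.card_range, nsmul_eq_mul]
      _ ≤ ∑ t ∈ Finset.range T, ‖f (t + 1) - f t‖ ^ 2 :=
          Finset.sum_le_sum (fun t ht =>
            pow_le_pow_left₀ hm0 (Finset.inf'_le _ ht) 2)
      _ ≤ K := htot
  rw [Real.le_sqrt hm0 (div_nonneg hK0 hT0.le)]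
  rw [le_div_iff₀ hT0]
  linarith
end

section
/- For the multicalibration boosting dynamics with relaxed rescaling weights w_t ∈ (0,1], the difference of successive squared residual norms satisfies, for every t ≥ 0, the exact identity: ‖y − f_t‖₂² − ‖y − f_{t+1}‖₂² = w_t η (2 − w_t η) ‖A(f_t)(y − f_t)‖₂² + (1 − w_t)² ‖f_t‖₂² − 2(1 − w_t) ⟨f_t, y − f_{t+1}⟩. -/
open Matrix
open scoped BigOperators

/-!
Write `r = y - f_t`, `u = A(f_t) r`, `s = w_t η` and `c = 1 - w_t`. The next residual is
`y - f_{t+1} = r + c f_t - s u`. Since `A(f_t)` is an orthogonal projection, `⟪r, u⟫ = ‖u‖²`,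
so `‖r - s u‖² = ‖r‖² - s (2 - s) ‖u‖²`; adding `c f_t` costs
`2 c ⟪f_t, y - f_{t+1}⟫ - c² ‖f_t‖²`, which gives the identity.
-/

open scoped InnerProductSpace

theorem LinearMap.IsSymmetricProjection.inner_apply_self {𝕜 E : Type*} [RCLike 𝕜]
    [NormedAddCommGroup E] [InnerProductSpace 𝕜 E] {T : E →ₗ[𝕜] E}
    (hT : T.IsSymmetricProjection) (x : E) : ⟪x, T x⟫_𝕜 = (‖T x‖ : 𝕜) ^ 2 := by
  conv_lhs => rw [← hT.isIdempotentElem.eq, Module.End.mul_apply, ← hT.isSymmetric]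
  exact inner_self_eq_norm_sq_to_K _

theorem Matrix.IsHermitian.isSymmetricProjection_toEuclideanLin {𝕜 n : Type*} [RCLike 𝕜]
    [Fintype n] [DecidableEq n] {P : Matrix n n 𝕜} (hP : P.IsHermitian)
    (hPP : IsIdempotentElem P) : (toEuclideanLin P).IsSymmetricProjection where
  isIdempotentElem := by
    rw [IsIdempotentElem, Module.End.mul_eq_comp, ← toLpLin_mul_same, hPP.eq]
  isSymmetric := isSymmetric_toEuclideanLin_iff.mpr hP

section RelaxedStep

variable {E : Type*} [NormedAddCommGroup E] [InnerProductSpace ℝ E]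

theorem norm_sub_smul_sq_of_inner_eq_norm_sq {r u : E} (hru : ⟪r, u⟫_ℝ = ‖u‖ ^ 2) (s : ℝ) :
    ‖r - s • u‖ ^ 2 = ‖r‖ ^ 2 - s * (2 - s) * ‖u‖ ^ 2 := by
  rw [norm_sub_sq_real, inner_smul_right, norm_smul, mul_pow, Real.norm_eq_abs, sq_abs, hru]
  ring

theorem norm_add_smul_sq_eq_inner_add_smul (v b : E) (c : ℝ) :
    ‖v + c • b‖ ^ 2 = ‖v‖ ^ 2 + 2 * c * ⟪b, v + c • b⟫_ℝ - c ^ 2 * ‖b‖ ^ 2 := by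
  rw [norm_add_sq_real, inner_add_right, inner_smul_right, inner_smul_right,
    real_inner_self_eq_norm_sq, real_inner_comm, norm_smul, mul_pow, Real.norm_eq_abs, sq_abs]
  ring

theorem norm_sq_sub_norm_add_smul_sub_smul_sq {r u : E} (hru : ⟪r, u⟫_ℝ = ‖u‖ ^ 2)
    (b : E) (c s : ℝ) :
    ‖r‖ ^ 2 - ‖r + c • b - s • u‖ ^ 2 =
      s * (2 - s) * ‖u‖ ^ 2 + c ^ 2 * ‖b‖ ^ 2 - 2 * c * ⟪b, r + c • b - s • u⟫_ℝ := by
  have hcomm : r + c • b - s • u = (r - s • u) + c • b := by abel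
  rw [hcomm, norm_add_smul_sq_eq_inner_add_smul, norm_sub_smul_sq_of_inner_eq_norm_sq hru]
  ring

end RelaxedStep

theorem multicalibration_boosting_relaxed_residual_identity_general
    {n : ℕ} (y : EuclideanSpace ℝ (Fin n)) (η : ℝ)
    (w : ℕ → ℝ)
    (A : EuclideanSpace ℝ (Fin n) → Matrix (Fin n) (Fin n) ℝ)
    (hAsymm : ∀ f, (A f)ᵀ = A f) (hAproj : ∀ f, A f * A f = A f)
    (f : ℕ → EuclideanSpace ℝ (Fin n))
    (hf : ∀ t, f (t + 1) = w t • (f t + η • mulVecE (A (f t)) (y - f t))) :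
    ∀ t : ℕ,
      ‖y - f t‖ ^ 2 - ‖y - f (t + 1)‖ ^ 2 =
        w t * η * (2 - w t * η) * ‖mulVecE (A (f t)) (y - f t)‖ ^ 2 +
          (1 - w t) ^ 2 * ‖f t‖ ^ 2 -
          2 * (1 - w t) * (inner ℝ (f t) (y - f (t + 1)) : ℝ) := by
  intro t
  set u := mulVecE (A (f t)) (y - f t)
  have hHerm : (A (f t)).IsHermitian := by
    rw [IsHermitian, conjTranspose_eq_transpose_of_trivial, hAsymm]
  have hru : ⟪y - f t, u⟫_ℝ = ‖u‖ ^ 2 :=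
    (hHerm.isSymmetricProjection_toEuclideanLin (hAproj (f t))).inner_apply_self (y - f t)
  have hnext : y - f (t + 1) = (y - f t) + (1 - w t) • f t - (w t * η) • u := by
    rw [hf t]; module
  rw [hnext]
  exact norm_sq_sub_norm_add_smul_sub_smul_sq hru (f t) (1 - w t) (w t * η)

/-- **Exact identity for successive squared residual norms under relaxed rescaling.**
For the dynamics `f_{t+1} = w_t (f_t + η A(f_t)(y - f_t))` with weights `w_t ∈ (0,1]` and
orthogonal projections `A(f)`, for every `t ≥ 0`:
`‖y-f_t‖₂² - ‖y-f_{t+1}‖₂² = w_t η (2 - w_t η) ‖A(f_t)(y-f_t)‖₂² + (1-w_t)² ‖f_t‖₂²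
  - 2(1-w_t) ⟨f_t, y - f_{t+1}⟩`. -/
theorem multicalibration_boosting_relaxed_residual_identity
    {n : ℕ} (y : EuclideanSpace ℝ (Fin n)) (η : ℝ) (hη0 : 0 < η) (hη1 : η ≤ 1)
    (w : ℕ → ℝ) (hw : ∀ t, w t ∈ Set.Ioc (0 : ℝ) 1)
    (A : EuclideanSpace ℝ (Fin n) → Matrix (Fin n) (Fin n) ℝ)
    (hAsymm : ∀ f, (A f)ᵀ = A f) (hAproj : ∀ f, A f * A f = A f)
    (f : ℕ → EuclideanSpace ℝ (Fin n))
    (hf : ∀ t, f (t + 1) = w t • (f t + η • mulVecE (A (f t)) (y - f t))) :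
    ∀ t : ℕ,
      ‖y - f t‖ ^ 2 - ‖y - f (t + 1)‖ ^ 2 =
        w t * η * (2 - w t * η) * ‖mulVecE (A (f t)) (y - f t)‖ ^ 2 +
          (1 - w t) ^ 2 * ‖f t‖ ^ 2 -
          2 * (1 - w t) * (inner ℝ (f t) (y - f (t + 1)) : ℝ) :=
  multicalibration_boosting_relaxed_residual_identity_general y η w A hAsymm hAproj f hf
end

section
/- For the multicalibration boosting update with adaptive rescaling, the training loss is non-increasing: if f ∈ ℝ^n is such that φ(f) = f + η A(f)(y − f) ≠ 0, and f' = ω(f) φ(f) with ω(f) = ⟨y, φ(f)⟩ / ‖φ(f)‖₂², then ‖y − f'‖₂ ≤ ‖y − f‖₂. -/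
open Matrix
open scoped RealInnerProductSpace

lemma mulVecE_mul_s13 {n : ℕ} (A B : Matrix (Fin n) (Fin n) ℝ) (v : EuclideanSpace ℝ (Fin n)) :
    mulVecE (A * B) v = mulVecE A (mulVecE B v) := by
  unfold mulVecE
  rw [Matrix.toEuclideanLin_eq_toLin,
    Matrix.toLin_mul (PiLp.basisFun 2 ℝ (Fin n)) (PiLp.basisFun 2 ℝ (Fin n))
      (PiLp.basisFun 2 ℝ (Fin n))]
  simp [Matrix.toEuclideanLin_eq_toLin]

lemma inner_mulVecE_transpose {n : ℕ} (A : Matrix (Fin n) (Fin n) ℝ)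
    (v w : EuclideanSpace ℝ (Fin n)) :
    ⟪mulVecE A v, w⟫ = ⟪v, mulVecE Aᵀ w⟫ := by
  unfold mulVecE
  have h : Matrix.toEuclideanLin Aᴴ = LinearMap.adjoint (Matrix.toEuclideanLin A) :=
    Matrix.toEuclideanLin_conjTranspose_eq_adjoint A
  have hA : Aᴴ = Aᵀ := by
    ext i j; simp [Matrix.conjTranspose_apply]
  rw [← hA, h, LinearMap.adjoint_inner_right]

/-- **Non-increasing loss for the adaptive rescaling step.**
With `φ(f) = f + η A(f)(y - f) ≠ 0`, `ω(f) = ⟪y, φ(f)⟫/‖φ(f)‖₂²` and `f' = ω(f) φ(f)`,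
one has `‖y - f'‖₂ ≤ ‖y - f‖₂`. -/
theorem adaptive_rescaling_loss_nonincreasing
    {n : ℕ} (y : EuclideanSpace ℝ (Fin n)) (η : ℝ) (hη0 : 0 < η) (hη1 : η ≤ 1)
    (A : EuclideanSpace ℝ (Fin n) → Matrix (Fin n) (Fin n) ℝ)
    (hAsymm : ∀ f, (A f)ᵀ = A f) (hAproj : ∀ f, A f * A f = A f)
    (f φ f' : EuclideanSpace ℝ (Fin n))
    (hφ : φ = f + η • mulVecE (A f) (y - f)) (hφ0 : φ ≠ 0)
    (hf' : f' = (⟪y, φ⟫ / ‖φ‖ ^ 2) • φ) :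
    ‖y - f'‖ ≤ ‖y - f‖ := by
  set v : EuclideanSpace ℝ (Fin n) := y - f with hv
  set w : EuclideanSpace ℝ (Fin n) := mulVecE (A f) v with hw
  -- w is idempotent image
  have hww : mulVecE (A f) w = w := by
    rw [hw, ← mulVecE_mul_s13, hAproj]
  -- key: ⟪v, w⟫ = ‖w‖²
  have hkey : ⟪v, w⟫ = ‖w‖ ^ 2 := by
    have h1 : ⟪w, w⟫ = ⟪v, mulVecE (A f) w⟫ := by
      rw [hw, inner_mulVecE_transpose, hAsymm]
    rw [hww] at h1
    rw [real_inner_comm] at h1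
    rw [← h1, real_inner_self_eq_norm_sq]
  -- step 1: ‖y - φ‖ ≤ ‖y - f‖
  have hyφ : y - φ = v - η • w := by
    rw [hφ, hv, hw]; abel
  have hstep1 : ‖y - φ‖ ^ 2 ≤ ‖y - f‖ ^ 2 := by
    rw [hyφ, ← hv]
    have hns : ‖v - η • w‖ ^ 2 = ‖v‖ ^ 2 - 2 * ⟪v, η • w⟫ + ‖η • w‖ ^ 2 :=
      norm_sub_sq_real v (η • w)
    rw [hns, real_inner_smul_right, norm_smul, hkey]
    have hwn : 0 ≤ ‖w‖ ^ 2 := sq_nonneg _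
    have hηn : ‖η‖ = η := by rw [Real.norm_eq_abs, abs_of_pos hη0]
    rw [mul_pow, hηn]
    nlinarith [mul_nonneg (mul_nonneg hη0.le (by linarith : (0:ℝ) ≤ 2 - η)) hwn]
  -- step 2: ‖y - f'‖ ≤ ‖y - φ‖
  have hφpos : 0 < ‖φ‖ := norm_pos_iff.mpr hφ0
  have hstep2 : ‖y - f'‖ ^ 2 ≤ ‖y - φ‖ ^ 2 := by
    have h1 : ‖y - f'‖ ^ 2 = ‖y‖ ^ 2 - 2 * ⟪y, f'⟫ + ‖f'‖ ^ 2 := norm_sub_sq_real y f'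
    have h2 : ‖y - φ‖ ^ 2 = ‖y‖ ^ 2 - 2 * ⟪y, φ⟫ + ‖φ‖ ^ 2 := norm_sub_sq_real y φ
    rw [hf'] at h1
    rw [real_inner_smul_right, norm_smul, Real.norm_eq_abs] at h1
    have hsq : |⟪y, φ⟫ / ‖φ‖ ^ 2| ^ 2 = (⟪y, φ⟫ / ‖φ‖ ^ 2) ^ 2 := sq_abs _
    rw [mul_pow, hsq] at h1
    have hφ2 : (0:ℝ) < ‖φ‖ ^ 2 := by positivity
    rw [hf', h1, h2]
    have key : (⟪y, φ⟫ / ‖φ‖ ^ 2) ^ 2 * ‖φ‖ ^ 2 = ⟪y, φ⟫ ^ 2 / ‖φ‖ ^ 2 := by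
      field_simp
    have ht : ⟪y, φ⟫ / ‖φ‖ ^ 2 * ⟪y, φ⟫ = ⟪y, φ⟫ ^ 2 / ‖φ‖ ^ 2 := by ring
    rw [key, ht]
    have hquad : 0 ≤ (⟪y, φ⟫ - ‖φ‖ ^ 2) ^ 2 / ‖φ‖ ^ 2 := by positivity
    have hexpand : (⟪y, φ⟫ - ‖φ‖ ^ 2) ^ 2 / ‖φ‖ ^ 2
        = ⟪y, φ⟫ ^ 2 / ‖φ‖ ^ 2 - 2 * ⟪y, φ⟫ + ‖φ‖ ^ 2 := by
      field_simp; ring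
    linarith [hquad, hexpand ▸ hquad]
  have : ‖y - f'‖ ^ 2 ≤ ‖y - f‖ ^ 2 := le_trans hstep2 hstep1
  nlinarith [norm_nonneg (y - f'), norm_nonneg (y - f)]
end

section
/- Inexact preconditioned gradient descent converges linearly up to the noise level: let V : ℝ^n → ℝ be differentiable with ⟨∇V(f) − ∇V(f'), f − f'⟩ ≥ μ‖f − f'‖₂² and ‖∇V(f) − ∇V(f')‖₂ ≤ L‖f − f'‖₂ for all f, f' ∈ ℝ^n (with 0 < μ ≤ L), and let f* ∈ ℝ^n satisfy ∇V(f*) = 0. Let P : ℝ^n → ℝ^{n×n} assign to each f a matrix with ℓ²-operator norm ‖P(f)‖₂ ≤ M and satisfying ⟨f − f*, P(f) ∇V(f)⟩ ≥ m ⟨f − f*, ∇V(f)⟩ for constants 0 < m ≤ M. For a step size η ∈ (0, 2mμ/(L²M²)) and an arbitrary perturbation sequence (ξ_t) in ℝ^n, define f_{t+1} = f_t − η (P(f_t) ∇V(f_t) + ξ_t). Then for every t ≥ 0, ‖f_{t+1} − f*‖₂ ≤ κ ‖f_t − f*‖₂ + η ‖ξ_t‖₂, where κ = √(1 − 2μmη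 + η² M² L²) < 1. -/
/-!
Expanding the square, `‖e - η w‖² = ‖e‖² - 2η⟪e, w⟫ + η²‖w‖²` for the error `e = f_t - f*` and
the preconditioned gradient `w = P(f_t) ∇V(f_t)`. Since `∇V(f*) = 0`, strong monotonicity of `∇V`
and the lower bound on `P` give `⟪e, w⟫ ≥ mμ‖e‖²`, while smoothness and `‖P‖₂ ≤ M` give
`‖w‖ ≤ ML‖e‖`; hence the exact step contracts by `κ`, and the perturbation `ξ_t` only adds
`η‖ξ_t‖` by the triangle inequality. The step-size condition is exactly `κ² < 1`.
-/

open Matrix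
open scoped RealInnerProductSpace Matrix.Norms.L2Operator

section InnerProductSpace

variable {E : Type*} [NormedAddCommGroup E] [InnerProductSpace ℝ E]

theorem norm_sub_smul_le_sqrt_mul_norm {e w : E} {a b η : ℝ} (hη : 0 ≤ η)
    (hinner : a * ‖e‖ ^ 2 ≤ ⟪e, w⟫) (hnorm : ‖w‖ ≤ b * ‖e‖) :
    ‖e - η • w‖ ≤ √(1 - 2 * a * η + η ^ 2 * b ^ 2) * ‖e‖ := by
  have hexpand : ‖e - η • w‖ ^ 2 = ‖e‖ ^ 2 - 2 * η * ⟪e, w⟫ + η ^ 2 * ‖w‖ ^ 2 := by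
    rw [norm_sub_sq_real, real_inner_smul_right, norm_smul, mul_pow, Real.norm_eq_abs, sq_abs]
    ring
  have hw_sq : ‖w‖ ^ 2 ≤ (b * ‖e‖) ^ 2 := pow_le_pow_left₀ (norm_nonneg w) hnorm 2
  have hsq : ‖e - η • w‖ ^ 2 ≤ (1 - 2 * a * η + η ^ 2 * b ^ 2) * ‖e‖ ^ 2 := by
    rw [hexpand]
    nlinarith [mul_le_mul_of_nonneg_left hinner hη, mul_le_mul_of_nonneg_left hw_sq (sq_nonneg η)]
  rw [← Real.sqrt_sq (norm_nonneg e), ← Real.sqrt_mul' _ (sq_nonneg _)]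
  exact Real.le_sqrt_of_sq_le hsq

theorem norm_sub_smul_preconditioned_le {e g w : E} {μ L m M η : ℝ} (hm : 0 ≤ m) (hM : 0 ≤ M)
    (hη : 0 ≤ η) (hg_inner : μ * ‖e‖ ^ 2 ≤ ⟪e, g⟫) (hg_norm : ‖g‖ ≤ L * ‖e‖)
    (hw_inner : m * ⟪e, g⟫ ≤ ⟪e, w⟫) (hw_norm : ‖w‖ ≤ M * ‖g‖) :
    ‖e - η • w‖ ≤ √(1 - 2 * (m * μ) * η + η ^ 2 * (M * L) ^ 2) * ‖e‖ := by
  refine norm_sub_smul_le_sqrt_mul_norm hη ?_ ?_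
  · calc m * μ * ‖e‖ ^ 2 = m * (μ * ‖e‖ ^ 2) := by ring
      _ ≤ m * ⟪e, g⟫ := mul_le_mul_of_nonneg_left hg_inner hm
      _ ≤ ⟪e, w⟫ := hw_inner
  · calc ‖w‖ ≤ M * (L * ‖e‖) := hw_norm.trans (mul_le_mul_of_nonneg_left hg_norm hM)
      _ = M * L * ‖e‖ := by ring

theorem norm_sub_smul_add_le (e w ξ : E) {η : ℝ} (hη : 0 ≤ η) :
    ‖e - η • (w + ξ)‖ ≤ ‖e - η • w‖ + η * ‖ξ‖ := by
  calc ‖e - η • (w + ξ)‖ = ‖(e - η • w) - η • ξ‖ := by rw [smul_add, sub_add_eq_sub_sub]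
    _ ≤ ‖e - η • w‖ + ‖η • ξ‖ := norm_sub_le _ _
    _ = ‖e - η • w‖ + η * ‖ξ‖ := by rw [norm_smul, Real.norm_of_nonneg hη]

end InnerProductSpace

theorem sqrt_one_sub_two_mul_add_lt_one {a b η : ℝ} (hb : 0 ≤ b) (hη0 : 0 < η)
    (hη : η < 2 * a / b) : √(1 - 2 * a * η + η ^ 2 * b) < 1 := by
  have hb_pos : 0 < b := by
    refine hb.lt_of_ne fun hb0 => ?_
    rw [← hb0, div_zero] at hη
    exact hη0.not_gt hη
  have hηb : η * b < 2 * a := (lt_div_iff₀ hb_pos).mp hη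
  rw [Real.sqrt_lt' one_pos]
  nlinarith [mul_lt_mul_of_pos_left hηb hη0]

theorem inexact_preconditioned_gradient_descent_linear_convergence_general
    {n : ℕ} (V : EuclideanSpace ℝ (Fin n) → ℝ)
    (μ L : ℝ)
    (hstrong : ∀ f f' : EuclideanSpace ℝ (Fin n),
      μ * ‖f - f'‖ ^ 2 ≤ ⟪gradient V f - gradient V f', f - f'⟫)
    (hsmooth : ∀ f f' : EuclideanSpace ℝ (Fin n),
      ‖gradient V f - gradient V f'‖ ≤ L * ‖f - f'‖)
    (fstar : EuclideanSpace ℝ (Fin n)) (hfstar : gradient V fstar = 0)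
    (P : EuclideanSpace ℝ (Fin n) → Matrix (Fin n) (Fin n) ℝ)
    (m M : ℝ) (hm : 0 < m)
    (hPnorm : ∀ f, ‖P f‖ ≤ M)
    (hPlower : ∀ f : EuclideanSpace ℝ (Fin n),
      m * ⟪f - fstar, gradient V f⟫ ≤ ⟪f - fstar, mulVecE (P f) (gradient V f)⟫)
    (η : ℝ) (hη0 : 0 < η) (hη : η < 2 * m * μ / (L ^ 2 * M ^ 2))
    (ξ : ℕ → EuclideanSpace ℝ (Fin n))
    (f : ℕ → EuclideanSpace ℝ (Fin n))
    (hf : ∀ t, f (t + 1) = f t - η • (mulVecE (P (f t)) (gradient V (f t)) + ξ t))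
    (κ : ℝ) (hκ : κ = Real.sqrt (1 - 2 * μ * m * η + η ^ 2 * M ^ 2 * L ^ 2)) :
    κ < 1 ∧ ∀ t : ℕ, ‖f (t + 1) - fstar‖ ≤ κ * ‖f t - fstar‖ + η * ‖ξ t‖ := by
  have hκ' : κ = √(1 - 2 * (m * μ) * η + η ^ 2 * (M * L) ^ 2) := by rw [hκ]; ring_nf
  refine ⟨?_, fun t => ?_⟩
  · refine hκ' ▸ sqrt_one_sub_two_mul_add_lt_one (sq_nonneg _) hη0 ?_
    rwa [mul_pow, mul_comm (M ^ 2), ← mul_assoc]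
  have hM : 0 ≤ M := (norm_nonneg _).trans (hPnorm fstar)
  have hgrad_inner : μ * ‖f t - fstar‖ ^ 2 ≤ ⟪f t - fstar, gradient V (f t)⟫ := by
    simpa [hfstar, real_inner_comm] using hstrong (f t) fstar
  have hgrad_norm : ‖gradient V (f t)‖ ≤ L * ‖f t - fstar‖ := by
    simpa [hfstar] using hsmooth (f t) fstar
  have hP_mul : ‖mulVecE (P (f t)) (gradient V (f t))‖ ≤ M * ‖gradient V (f t)‖ :=
    ((P (f t)).l2_opNorm_mulVec _).trans (mul_le_mul_of_nonneg_right (hPnorm _) (norm_nonneg _))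
  have hexact := norm_sub_smul_preconditioned_le hm.le hM hη0.le hgrad_inner hgrad_norm
    (hPlower (f t)) hP_mul
  rw [hf t, sub_right_comm, hκ']
  exact (norm_sub_smul_add_le _ _ _ hη0.le).trans (add_le_add_left hexact _)

/-- **Linear convergence of inexact preconditioned gradient descent.**
Let `V` be differentiable, `μ`-strongly convex and `L`-smooth (expressed via its gradient),
with `∇V(f*) = 0`. Let `P(f)` satisfy `‖P(f)‖₂ ≤ M` and
`⟨f - f*, P(f)∇V(f)⟩ ≥ m ⟨f - f*, ∇V(f)⟩` with `0 < m ≤ M`. For a step size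
`η ∈ (0, 2mμ/(L²M²))` and perturbations `ξ_t`, the iterates
`f_{t+1} = f_t - η (P(f_t)∇V(f_t) + ξ_t)` satisfy
`‖f_{t+1} - f*‖₂ ≤ κ‖f_t - f*‖₂ + η‖ξ_t‖₂` with `κ = √(1 - 2μmη + η²M²L²) < 1`. -/
theorem inexact_preconditioned_gradient_descent_linear_convergence
    {n : ℕ} (V : EuclideanSpace ℝ (Fin n) → ℝ) (hV : Differentiable ℝ V)
    (μ L : ℝ) (hμ : 0 < μ) (hμL : μ ≤ L)
    (hstrong : ∀ f f' : EuclideanSpace ℝ (Fin n),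
      μ * ‖f - f'‖ ^ 2 ≤ ⟪gradient V f - gradient V f', f - f'⟫)
    (hsmooth : ∀ f f' : EuclideanSpace ℝ (Fin n),
      ‖gradient V f - gradient V f'‖ ≤ L * ‖f - f'‖)
    (fstar : EuclideanSpace ℝ (Fin n)) (hfstar : gradient V fstar = 0)
    (P : EuclideanSpace ℝ (Fin n) → Matrix (Fin n) (Fin n) ℝ)
    (m M : ℝ) (hm : 0 < m) (hmM : m ≤ M)
    (hPnorm : ∀ f, ‖P f‖ ≤ M)
    (hPlower : ∀ f : EuclideanSpace ℝ (Fin n),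
      m * ⟪f - fstar, gradient V f⟫ ≤ ⟪f - fstar, mulVecE (P f) (gradient V f)⟫)
    (η : ℝ) (hη0 : 0 < η) (hη : η < 2 * m * μ / (L ^ 2 * M ^ 2))
    (ξ : ℕ → EuclideanSpace ℝ (Fin n))
    (f : ℕ → EuclideanSpace ℝ (Fin n))
    (hf : ∀ t, f (t + 1) = f t - η • (mulVecE (P (f t)) (gradient V (f t)) + ξ t))
    (κ : ℝ) (hκ : κ = Real.sqrt (1 - 2 * μ * m * η + η ^ 2 * M ^ 2 * L ^ 2)) :
    κ < 1 ∧ ∀ t : ℕ, ‖f (t + 1) - fstar‖ ≤ κ * ‖f t - fstar‖ + η * ‖ξ t‖ :=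
  inexact_preconditioned_gradient_descent_linear_convergence_general V μ L hstrong hsmooth fstar
    hfstar P m M hm hPnorm hPlower η hη0 hη ξ f hf κ hκ
end
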